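/- arXiv:math/0305074 — 2 statements merged into one kernel-verified Lean document; each statement's English description precedes it below -/
import Mathlib

section
/- Let A be a closed linear operator on a nonarchimedean Banach space over a complete extension of ℚ_p, and y_0 ∈ ⋂_n D(A^n). The series ∑_{k≥0} A^k y_0 z^k / k! converges for all z ∈ Ω_p if and only if y_0 ∈ ⋂_{α>0} E_α(A), i.e. limsup ‖A^n y_0‖^(1/n) = 0. -/
open Nat

private lemma padic_norm_factorial_ge {p : ℕ} [hp : Fact p.Prime] (k : ℕ) :
    ((p : ℝ) ^ k)⁻¹ ≤ ‖((k ! : ℚ_[p]))‖ := by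
  have hk : (k ! : ℚ_[p]) ≠ 0 := Nat.cast_ne_zero.mpr k.factorial_ne_zero
  rw [Padic.norm_eq_zpow_neg_valuation hk, Padic.valuation_natCast]
  have hv : padicValNat p (k !) ≤ k := by
    have h := sub_one_mul_padicValNat_factorial (p := p) k
    have h1 : padicValNat p (k !) ≤ (p - 1) * padicValNat p (k !) :=
      Nat.le_mul_of_pos_left _ (by have := hp.out.two_le; omega)
    exact h1.trans (h ▸ Nat.sub_le _ _)
  have hb : (1 : ℝ) ≤ (p : ℝ) := by exact_mod_cast hp.out.one_le
  calc ((p : ℝ) ^ k)⁻¹ = (p : ℝ) ^ (-(k : ℤ)) := by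
        rw [zpow_neg, zpow_natCast]
    _ ≤ (p : ℝ) ^ (-(padicValNat p (k !) : ℤ)) := by
        apply zpow_le_zpow_right₀ hb
        omega

/-- The exponential series `∑ Aᵏy₀ zᵏ/k!` converges for all `z` if and only if
`y₀ ∈ ⋂_{α>0} E_α(A)`, i.e. for every `α > 0` there is `c > 0` with
`‖Aᵏy₀‖ ≤ c αᵏ` for all `k` (orbit `u k = Aᵏ y₀`). -/
theorem entire_series_iff_all_types
    {p : ℕ} [Fact p.Prime]
    {K : Type*} [NontriviallyNormedField K] [NormedAlgebra ℚ_[p] K]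
    [IsUltrametricDist K] [CompleteSpace K]
    (hiso : ∀ q : ℚ_[p], ‖algebraMap ℚ_[p] K q‖ = ‖q‖)
    {𝔅 : Type*} [NormedAddCommGroup 𝔅] [NormedSpace K 𝔅] [CompleteSpace 𝔅]
    [IsUltrametricDist 𝔅]
    (A : 𝔅 →ₗ.[K] 𝔅) (hA : A.IsClosed)
    (y₀ : 𝔅) (u : ℕ → 𝔅) (hu0 : u 0 = y₀)
    (horb : ∀ n : ℕ, (u n, u (n + 1)) ∈ A.graph) :
    (∀ z : K, Summable (fun k : ℕ => ((k ! : K))⁻¹ • (z ^ k • u k))) ↔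
      (∀ α > (0 : ℝ), ∃ c > (0 : ℝ), ∀ k : ℕ, ‖u k‖ ≤ c * α ^ k) := by
  have hp2 : (0 : ℝ) < (p : ℝ) := by exact_mod_cast (Fact.out : p.Prime).pos
  -- norm of the factorial in K
  have hfactK : ∀ k : ℕ, ‖((k ! : K))‖ = ‖((k ! : ℚ_[p]))‖ := by
    intro k
    rw [show ((k ! : K)) = algebraMap ℚ_[p] K ((k ! : ℚ_[p])) by
      rw [map_natCast]]
    exact hiso _
  have hfact_pos : ∀ k : ℕ, 0 < ‖((k ! : ℚ_[p]))‖ := fun k =>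
    norm_pos_iff.mpr (Nat.cast_ne_zero.mpr k.factorial_ne_zero)
  have hfact_le_one : ∀ k : ℕ, ‖((k ! : ℚ_[p]))‖ ≤ 1 := fun k => by
    simpa using Padic.norm_int_le_one (p := p) (k ! : ℤ)
  have hterm : ∀ (z : K) (k : ℕ),
      ‖((k ! : K))⁻¹ • (z ^ k • u k)‖ = ‖((k ! : ℚ_[p]))‖⁻¹ * (‖z‖ ^ k * ‖u k‖) := by
    intro z k
    rw [norm_smul, norm_smul, norm_inv, norm_pow, hfactK]
  constructor
  · -- summable for all z → all types
    intro h α hα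
    obtain ⟨z, hz⟩ := NormedField.exists_lt_norm K α⁻¹
    have hz0 : 0 < ‖z‖ := lt_trans (by positivity) hz
    have htend := (h z).tendsto_atTop_zero
    have hbdd : BddAbove (Set.range fun k => ‖((k ! : K))⁻¹ • (z ^ k • u k)‖) :=
      (htend.norm.congr (fun k => rfl)).bddAbove_range
    obtain ⟨M, hM⟩ := hbdd
    have hM' : ∀ k, ‖((k ! : K))⁻¹ • (z ^ k • u k)‖ ≤ M := fun k =>
      hM (Set.mem_range_self k)
    have hM0 : 0 ≤ M := le_trans (norm_nonneg _) (hM' 0)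
    refine ⟨M + 1, by positivity, fun k => ?_⟩
    have h1 := hM' k
    rw [hterm] at h1
    have key : ‖u k‖ ≤ M * (‖z‖⁻¹) ^ k := by
      have h2 : ‖z‖ ^ k * ‖u k‖ ≤ M * ‖((k ! : ℚ_[p]))‖ := by
        rw [inv_mul_le_iff₀ (hfact_pos k)] at h1
        linarith [h1]
      have h3 : ‖z‖ ^ k * ‖u k‖ ≤ M := le_trans h2 (by
        nlinarith [hfact_le_one k, hfact_pos k])
      have hzk : (0 : ℝ) < ‖z‖ ^ k := by positivity
      rw [inv_pow, ← div_eq_mul_inv, le_div_iff₀ hzk]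
      calc ‖u k‖ * ‖z‖ ^ k = ‖z‖ ^ k * ‖u k‖ := mul_comm _ _
        _ ≤ M := h3
    calc ‖u k‖ ≤ M * (‖z‖⁻¹) ^ k := key
      _ ≤ M * α ^ k := by
          apply mul_le_mul_of_nonneg_left _ hM0
          apply pow_le_pow_left₀ (by positivity)
          rw [inv_le_comm₀ hz0 hα]
          exact le_of_lt hz
      _ ≤ (M + 1) * α ^ k := by nlinarith [pow_pos hα k]
  · -- all types → summable for all z
    intro h z
    set α : ℝ := ((p : ℝ) * (‖z‖ + 1) * 2)⁻¹ with hαdef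
    have hα : 0 < α := by positivity
    obtain ⟨c, hc, hcb⟩ := h α hα
    have hr : (p : ℝ) * ‖z‖ * α < 1 := by
      have hd : (0 : ℝ) < (p : ℝ) * (‖z‖ + 1) * 2 := by positivity
      rw [hαdef, ← div_eq_mul_inv, div_lt_one hd]
      nlinarith [norm_nonneg z]
    have hr0 : 0 ≤ (p : ℝ) * ‖z‖ * α := by positivity
    apply NonarchimedeanAddGroup.summable_of_tendsto_cofinite_zero
    rw [Nat.cofinite_eq_atTop]
    have hub : ∀ k : ℕ, ‖((k ! : K))⁻¹ • (z ^ k • u k)‖ ≤ c * ((p : ℝ) * ‖z‖ * α) ^ k := by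
      intro k
      rw [hterm]
      have h1 : ‖((k ! : ℚ_[p]))‖⁻¹ ≤ (p : ℝ) ^ k := by
        rw [inv_le_comm₀ (hfact_pos k) (by positivity)]
        exact padic_norm_factorial_ge k
      calc ‖((k ! : ℚ_[p]))‖⁻¹ * (‖z‖ ^ k * ‖u k‖)
          ≤ (p : ℝ) ^ k * (‖z‖ ^ k * (c * α ^ k)) := by
            apply mul_le_mul h1 _ (by positivity) (by positivity)
            exact mul_le_mul_of_nonneg_left (hcb k) (by positivity)
        _ = c * ((p : ℝ) * ‖z‖ * α) ^ k := by ring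
    exact squeeze_zero_norm hub (by
      simpa using (tendsto_pow_atTop_nhds_zero_of_lt_one hr0 hr).const_mul c)
end

section
/- Let a_β(x) ∈ 𝒜_ρ for |β| ≤ n and φ ∈ 𝒜_ρ. Then the p-adic Cauchy problem ∂u/∂t = ∑_{|β|≤n} a_β(x) D^β u, u(0,x) = φ(x), has a unique solution u(t,·) given by a 𝒜_ρ-valued power series in t convergent on the disk |t|_p < p^(-1/(p-1)) / max_β{ρ^{-|β|}‖a_β‖_ρ}, namely u(t) = ∑_{k≥0} A^k φ · t^k/k! where A f = ∑_β a_β D^β f. -/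
open Nat Filter

/-- Membership in the Tate-type algebra `𝒜_ρ`: `|f_α| ρ^|α| → 0`. -/
def MemTate {Ω : Type*} [NontriviallyNormedField Ω] (n : ℕ) (ρ : ℝ)
    (f : (Fin n → ℕ) → Ω) : Prop :=
  Tendsto (fun α : Fin n → ℕ => ‖f α‖ * ρ ^ (∑ j, α j)) cofinite (nhds 0)

/-- The iterated formal derivative `D^β` on coefficients. -/
noncomputable def tateDpow {Ω : Type*} [NontriviallyNormedField Ω] {n : ℕ}
    (β : Fin n → ℕ) (f : (Fin n → ℕ) → Ω) : (Fin n → ℕ) → Ω :=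
  fun γ => ((∏ j, (γ j + β j).descFactorial (β j) : ℕ) : Ω) * f (γ + β)

/-- The Cauchy product on coefficients. -/
noncomputable def tateMul {Ω : Type*} [NontriviallyNormedField Ω] {n : ℕ}
    (f g : (Fin n → ℕ) → Ω) : (Fin n → ℕ) → Ω :=
  fun α => ∑ i ∈ Finset.Iic α, f i * g (α - i)

/-- The differential operator `A f = ∑_{|β| ≤ n} a_β D^β f` on coefficients. -/
noncomputable def tateOp {Ω : Type*} [NontriviallyNormedField Ω] {n : ℕ}
    (B : Finset (Fin n → ℕ)) (a : (Fin n → ℕ) → ((Fin n → ℕ) → Ω))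
    (f : (Fin n → ℕ) → Ω) : (Fin n → ℕ) → Ω :=
  fun γ => ∑ β ∈ B, tateMul (a β) (tateDpow β f) γ


open Nat Filter

section pckAux

open IsUltrametricDist

variable {Ω : Type*} [NontriviallyNormedField Ω] {n : ℕ} {ρ : ℝ}

lemma pck_bound_exists (hρ : 0 < ρ) {f : (Fin n → ℕ) → Ω}
    (hf : Tendsto (fun α : Fin n → ℕ => ‖f α‖ * ρ ^ (∑ j, α j)) cofinite (nhds 0)) :
    ∃ C : ℝ, 0 < C ∧ ∀ γ, ‖f γ‖ * ρ ^ (∑ j, γ j) ≤ C := by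
  have h1 : ∀ᶠ γ in (cofinite : Filter (Fin n → ℕ)), ‖f γ‖ * ρ ^ (∑ j, γ j) < 1 :=
    hf.eventually_lt_const one_pos
  have hs : {γ : Fin n → ℕ | ¬ ‖f γ‖ * ρ ^ (∑ j, γ j) < 1}.Finite :=
    Filter.eventually_cofinite.mp h1
  refine ⟨1 + ∑ γ ∈ hs.toFinset, ‖f γ‖ * ρ ^ (∑ j, γ j), ?_, ?_⟩
  · have : (0:ℝ) ≤ ∑ γ ∈ hs.toFinset, ‖f γ‖ * ρ ^ (∑ j, γ j) :=
      Finset.sum_nonneg fun γ _ => by positivity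
    linarith
  · intro γ
    by_cases hγ : ‖f γ‖ * ρ ^ (∑ j, γ j) < 1
    · have : (0:ℝ) ≤ ∑ γ ∈ hs.toFinset, ‖f γ‖ * ρ ^ (∑ j, γ j) :=
        Finset.sum_nonneg fun γ _ => by positivity
      linarith
    · have hmem : γ ∈ hs.toFinset := hs.mem_toFinset.mpr hγ
      have := Finset.single_le_sum (f := fun γ : Fin n → ℕ => ‖f γ‖ * ρ ^ (∑ j, γ j))
        (fun γ _ => by positivity) hmem
      linarith

lemma pck_bridge [IsUltrametricDist Ω] (hρ : 0 < ρ) (hone : ∀ N : ℕ, ‖(N : Ω)‖ ≤ 1)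
    (B : Finset (Fin n → ℕ)) (a : (Fin n → ℕ) → ((Fin n → ℕ) → Ω))
    (f : (Fin n → ℕ) → Ω) (γ : Fin n → ℕ) {b : ℝ} (hb : 0 ≤ b)
    (h : ∀ β ∈ B, ∀ i ∈ Finset.Iic γ,
      (‖a β i‖ * ρ ^ (∑ j, i j)) *
        ((‖f ((γ - i) + β)‖ * ρ ^ (∑ j, ((γ - i) + β) j)) * (ρ ^ (∑ j, β j))⁻¹) ≤ b) :
    ‖tateOp B a f γ‖ * ρ ^ (∑ j, γ j) ≤ b := by
  have hργ : (0:ℝ) < ρ ^ (∑ j, γ j) := pow_pos hρ _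
  rw [← le_div_iff₀ hργ]
  simp only [tateOp, tateMul, tateDpow]
  apply norm_sum_le_of_forall_le_of_nonneg (by positivity)
  intro β hβ
  apply norm_sum_le_of_forall_le_of_nonneg (by positivity)
  intro i hi
  rw [le_div_iff₀ hργ]
  have hiγ : i ≤ γ := Finset.mem_Iic.mp hi
  have hwt : (∑ j, i j) + (∑ j, (γ - i) j) = ∑ j, γ j := by
    rw [← Finset.sum_add_distrib]
    exact Finset.sum_congr rfl fun j _ => Nat.add_sub_cancel' (hiγ j)
  have h2 : (∑ j, ((γ - i) + β) j) = (∑ j, (γ - i) j) + ∑ j, β j := by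
    simp [Finset.sum_add_distrib]
  have hβρ : (0:ℝ) < ρ ^ (∑ j, β j) := pow_pos hρ _
  have key : ‖a β i * (((∏ j, ((γ - i) j + β j).descFactorial (β j) : ℕ) : Ω) * f ((γ - i) + β))‖
        * ρ ^ (∑ j, γ j)
      = ‖((∏ j, ((γ - i) j + β j).descFactorial (β j) : ℕ) : Ω)‖ *
        ((‖a β i‖ * ρ ^ (∑ j, i j)) *
          ((‖f ((γ - i) + β)‖ * ρ ^ (∑ j, ((γ - i) + β) j)) * (ρ ^ (∑ j, β j))⁻¹)) := by
    rw [norm_mul, norm_mul, ← hwt, h2, pow_add, pow_add]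
    field_simp
  rw [key]
  calc ‖((∏ j, ((γ - i) j + β j).descFactorial (β j) : ℕ) : Ω)‖ *
        ((‖a β i‖ * ρ ^ (∑ j, i j)) *
          ((‖f ((γ - i) + β)‖ * ρ ^ (∑ j, ((γ - i) + β) j)) * (ρ ^ (∑ j, β j))⁻¹))
      ≤ 1 * b := by
        apply mul_le_mul (hone _) (h β hβ i hi) (by positivity) zero_le_one
    _ = b := one_mul b

lemma pck_opBound [IsUltrametricDist Ω] (hρ : 0 < ρ) (hone : ∀ N : ℕ, ‖(N : Ω)‖ ≤ 1)
    {B : Finset (Fin n → ℕ)} {a : (Fin n → ℕ) → ((Fin n → ℕ) → Ω)} {Ca : (Fin n → ℕ) → ℝ}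
    (hCa : ∀ β ∈ B, ∀ i : Fin n → ℕ, ‖a β i‖ * ρ ^ (∑ j, i j) ≤ Ca β)
    {M : ℝ} (hM : ∀ β ∈ B, (ρ ^ (∑ j, β j))⁻¹ * Ca β ≤ M) (hM0 : 0 ≤ M)
    {f : (Fin n → ℕ) → Ω} {C : ℝ} (hC : 0 ≤ C)
    (hf : ∀ γ, ‖f γ‖ * ρ ^ (∑ j, γ j) ≤ C) (γ : Fin n → ℕ) :
    ‖tateOp B a f γ‖ * ρ ^ (∑ j, γ j) ≤ M * C := by
  apply pck_bridge hρ hone _ _ _ _ (mul_nonneg hM0 hC)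
  intro β hβ i hi
  have h1 : ‖a β i‖ * ρ ^ (∑ j, i j) ≤ Ca β := hCa β hβ i
  have h2 : ‖f ((γ - i) + β)‖ * ρ ^ (∑ j, ((γ - i) + β) j) ≤ C := hf _
  have hr : (0:ℝ) < (ρ ^ (∑ j, β j))⁻¹ := by positivity
  calc (‖a β i‖ * ρ ^ (∑ j, i j)) *
        ((‖f ((γ - i) + β)‖ * ρ ^ (∑ j, ((γ - i) + β) j)) * (ρ ^ (∑ j, β j))⁻¹)
      ≤ Ca β * (C * (ρ ^ (∑ j, β j))⁻¹) :=
        mul_le_mul h1 (mul_le_mul_of_nonneg_right h2 hr.le) (by positivity)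
          (le_trans (by positivity) h1)
    _ = ((ρ ^ (∑ j, β j))⁻¹ * Ca β) * C := by ring
    _ ≤ M * C := mul_le_mul_of_nonneg_right (hM β hβ) hC

end pckAux

section pckAux2

open IsUltrametricDist

variable {Ω : Type*} [NontriviallyNormedField Ω] {n : ℕ} {ρ : ℝ}

lemma pck_memTate_const_mul {f : (Fin n → ℕ) → Ω} (hf : MemTate n ρ f) (cst : Ω) :
    MemTate n ρ (fun γ => cst * f γ) := by
  unfold MemTate at *
  have h := hf.const_mul ‖cst‖
  rw [mul_zero] at h
  refine h.congr fun γ => ?_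
  simp [norm_mul, mul_assoc]

lemma pck_memTate_sum {ι : Type*} {s : Finset ι} {F : ι → (Fin n → ℕ) → Ω}
    (hρ : 0 < ρ) (h : ∀ k ∈ s, MemTate n ρ (F k)) :
    MemTate n ρ (fun γ => ∑ k ∈ s, F k γ) := by
  unfold MemTate at *
  have h0 : Tendsto (fun γ : Fin n → ℕ => ∑ k ∈ s, (‖F k γ‖ * ρ ^ (∑ j, γ j)))
      cofinite (nhds 0) := by
    have := tendsto_finset_sum s h
    simpa using this
  apply squeeze_zero (fun γ => by positivity) (fun γ => ?_) h0
  calc ‖∑ k ∈ s, F k γ‖ * ρ ^ (∑ j, γ j)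
      ≤ (∑ k ∈ s, ‖F k γ‖) * ρ ^ (∑ j, γ j) :=
        mul_le_mul_of_nonneg_right (norm_sum_le s _) (by positivity)
    _ = ∑ k ∈ s, ‖F k γ‖ * ρ ^ (∑ j, γ j) := Finset.sum_mul ..

lemma pck_null_mul {g h : (Fin n → ℕ) → ℝ} (hg0 : ∀ i, 0 ≤ g i) (hh0 : ∀ i, 0 ≤ h i)
    {G H : ℝ} (hG : 0 < G) (hH : 0 < H) (hgB : ∀ i, g i ≤ G) (hhB : ∀ i, h i ≤ H)
    (hgT : Tendsto g cofinite (nhds 0)) (hhT : Tendsto h cofinite (nhds 0))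
    {ε : ℝ} (hε : 0 < ε) :
    ∀ᶠ γ in (cofinite : Filter (Fin n → ℕ)), ∀ i ∈ Finset.Iic γ, g i * h (γ - i) ≤ ε := by
  have hS : {i : Fin n → ℕ | ¬ g i < ε / H}.Finite :=
    Filter.eventually_cofinite.mp (hgT.eventually_lt_const (div_pos hε hH))
  have hT : {i : Fin n → ℕ | ¬ h i < ε / G}.Finite :=
    Filter.eventually_cofinite.mp (hhT.eventually_lt_const (div_pos hε hG))
  rw [Filter.eventually_cofinite]
  refine Set.Finite.subset ((hS.prod hT).image fun q => q.1 + q.2) ?_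
  intro γ hγ
  simp only [Set.mem_setOf_eq] at hγ
  push_neg at hγ
  obtain ⟨i, hi, hlt⟩ := hγ
  have hiγ : i ≤ γ := Finset.mem_Iic.mp hi
  have h1 : ε / H ≤ g i := by
    by_contra hc
    push_neg at hc
    have : g i * h (γ - i) < ε := by
      calc g i * h (γ - i) ≤ g i * H := mul_le_mul_of_nonneg_left (hhB _) (hg0 _)
        _ < (ε / H) * H := mul_lt_mul_of_pos_right hc hH
        _ = ε := div_mul_cancel₀ ε hH.ne'
    linarith
  have h2 : ε / G ≤ h (γ - i) := by
    by_contra hc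
    push_neg at hc
    have : g i * h (γ - i) < ε := by
      calc g i * h (γ - i) ≤ G * h (γ - i) := mul_le_mul_of_nonneg_right (hgB _) (hh0 _)
        _ < G * (ε / G) := mul_lt_mul_of_pos_left hc hG
        _ = ε := mul_div_cancel₀ ε hG.ne'
    linarith
  refine (Set.mem_image _ _ _).mpr ⟨(i, γ - i), Set.mem_prod.mpr ⟨not_lt.mpr h1, not_lt.mpr h2⟩, ?_⟩
  funext j
  exact Nat.add_sub_cancel' (hiγ j)

lemma pck_memTate_op [IsUltrametricDist Ω] (hρ : 0 < ρ) (hone : ∀ N : ℕ, ‖(N : Ω)‖ ≤ 1)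
    {B : Finset (Fin n → ℕ)} {a : (Fin n → ℕ) → ((Fin n → ℕ) → Ω)}
    (ha : ∀ β ∈ B, MemTate n ρ (a β))
    {f : (Fin n → ℕ) → Ω} (hf : MemTate n ρ f) : MemTate n ρ (tateOp B a f) := by
  unfold MemTate at *
  rw [Metric.tendsto_nhds]
  intro ε hε
  have main : ∀ β ∈ B, ∀ᶠ γ in (cofinite : Filter (Fin n → ℕ)), ∀ i ∈ Finset.Iic γ,
      (‖a β i‖ * ρ ^ (∑ j, i j)) *
        ((‖f ((γ - i) + β)‖ * ρ ^ (∑ j, ((γ - i) + β) j)) * (ρ ^ (∑ j, β j))⁻¹) ≤ ε / 2 := by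
    intro β hβ
    obtain ⟨G, hG0, hGb⟩ := pck_bound_exists hρ (ha β hβ)
    obtain ⟨Cf, hCf0, hCfb⟩ := pck_bound_exists hρ hf
    have hβρ : (0:ℝ) < (ρ ^ (∑ j, β j))⁻¹ := by positivity
    have hhbT : Tendsto
        (fun jj : Fin n → ℕ => (‖f (jj + β)‖ * ρ ^ (∑ j, (jj + β) j)) * (ρ ^ (∑ j, β j))⁻¹)
        cofinite (nhds 0) := by
      have h1 : Tendsto (fun jj : Fin n → ℕ => ‖f (jj + β)‖ * ρ ^ (∑ j, (jj + β) j))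
          cofinite (nhds 0) := hf.comp ((add_left_injective β).tendsto_cofinite)
      simpa using h1.mul_const _
    exact pck_null_mul (fun i => by positivity) (fun i => by positivity) hG0
      (mul_pos hCf0 hβρ) hGb
      (fun jj => mul_le_mul_of_nonneg_right (hCfb _) hβρ.le)
      (ha β hβ) hhbT (half_pos hε)
  have hall := (Filter.eventually_all_finset B).mpr main
  filter_upwards [hall] with γ hγ
  rw [Real.dist_eq, sub_zero, abs_of_nonneg (by positivity)]
  have hbr := pck_bridge hρ hone B a f γ (half_pos hε).le hγ
  linarith

end pckAux2

section pckAux3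

open IsUltrametricDist

variable {Ω : Type*} [NontriviallyNormedField Ω] {n : ℕ} {ρ : ℝ}

lemma pck_factorial_norm {p : ℕ} [Fact p.Prime] (k : ℕ) :
    (p : ℝ) ^ ((-(1:ℝ)/((p:ℝ)-1)) * k) ≤ ‖((k ! : ℚ_[p]))‖ := by
  have hp2 : 2 ≤ p := (Fact.out : p.Prime).two_le
  have hp1 : 1 < (p:ℝ) := by exact_mod_cast (Fact.out : p.Prime).one_lt
  have hk0 : ((k ! : ℕ) : ℚ_[p]) ≠ 0 := Nat.cast_ne_zero.mpr k.factorial_ne_zero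
  rw [Padic.norm_eq_zpow_neg_valuation hk0, Padic.valuation_natCast, ← Real.rpow_intCast]
  rw [Real.rpow_le_rpow_left_iff hp1]
  have hleg := sub_one_mul_padicValNat_factorial (p := p) k
  have h2 : (p - 1) * padicValNat p (k !) ≤ k := by rw [hleg]; exact Nat.sub_le _ _
  have h3 : ((p:ℝ) - 1) * (padicValNat p (k !) : ℝ) ≤ k := by
    have h4 := (Nat.cast_le (α := ℝ)).mpr h2
    push_cast [Nat.cast_sub (le_of_lt (Fact.out : p.Prime).one_lt)] at h4
    linarith
  have hp1' : (0:ℝ) < (p:ℝ) - 1 := by linarith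
  rw [Int.cast_neg, Int.cast_natCast, div_mul_eq_mul_div, div_le_iff₀ hp1']
  nlinarith [h3]

lemma pck_tateOp_const_mul {B : Finset (Fin n → ℕ)} {a : (Fin n → ℕ) → ((Fin n → ℕ) → Ω)}
    (c : Ω) (f : (Fin n → ℕ) → Ω) (γ : Fin n → ℕ) :
    tateOp B a (fun γ' => c * f γ') γ = c * tateOp B a f γ := by
  simp only [tateOp, tateMul, tateDpow, Finset.mul_sum]
  refine Finset.sum_congr rfl fun β _ => Finset.sum_congr rfl fun i _ => by ring

lemma pck_tateOp_tsum [IsUltrametricDist Ω] [CompleteSpace Ω]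
    {B : Finset (Fin n → ℕ)} {a : (Fin n → ℕ) → ((Fin n → ℕ) → Ω)}
    {F : ℕ → (Fin n → ℕ) → Ω} (hF : ∀ γ', Summable (fun k => F k γ')) (γ : Fin n → ℕ) :
    tateOp B a (fun γ' => ∑' k, F k γ') γ = ∑' k, tateOp B a (F k) γ := by
  simp only [tateOp, tateMul, tateDpow]
  have step1 : ∀ β ∈ B, ∀ i ∈ Finset.Iic γ,
      a β i * (((∏ j, ((γ - i) j + β j).descFactorial (β j) : ℕ) : Ω) * ∑' k, F k ((γ - i) + β))
      = ∑' k, a β i * (((∏ j, ((γ - i) j + β j).descFactorial (β j) : ℕ) : Ω) * F k ((γ - i) + β)) := by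
    intro β _ i _
    rw [tsum_mul_left, tsum_mul_left]
  rw [Finset.sum_congr rfl fun β hβ => Finset.sum_congr rfl fun i hi => step1 β hβ i hi]
  rw [Finset.sum_congr rfl fun β (hβ : β ∈ B) =>
    (Summable.tsum_finsetSum fun i (_ : i ∈ Finset.Iic γ) => ((hF _).mul_left _).mul_left _).symm]
  exact (Summable.tsum_finsetSum fun β _ => summable_sum fun i _ => ((hF _).mul_left _).mul_left _).symm

lemma pck_zero_coeff {Ω : Type*} [NontriviallyNormedField Ω] [IsUltrametricDist Ω]
    [CompleteSpace Ω] {r : ℝ} (hr : 0 < r) :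
    ∀ (c : ℕ → Ω), (∀ t : Ω, t ≠ 0 → ‖t‖ < r →
      Summable (fun k => t ^ k * c k) ∧ ∑' k, t ^ k * c k = 0) →
    ∀ k, c k = 0 := by
  have base : ∀ (c : ℕ → Ω), (∀ t : Ω, t ≠ 0 → ‖t‖ < r →
      Summable (fun k => t ^ k * c k) ∧ ∑' k, t ^ k * c k = 0) → c 0 = 0 := by
    intro c hc
    obtain ⟨t0, ht00, ht0r⟩ := NormedField.exists_norm_lt Ω hr
    have ht0ne : t0 ≠ 0 := by
      intro h; rw [h, norm_zero] at ht00; exact lt_irrefl _ ht00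
    obtain ⟨hsum0, -⟩ := hc t0 ht0ne ht0r
    have htend : Tendsto (fun k => ‖t0 ^ k * c k‖) atTop (nhds 0) := by
      simpa using hsum0.tendsto_atTop_zero.norm
    obtain ⟨C, hC⟩ := htend.bddAbove_range
    have hCb : ∀ k, ‖t0 ^ k * c k‖ ≤ C := fun k => hC (Set.mem_range_self k)
    have hC0 : 0 ≤ C := le_trans (norm_nonneg _) (hCb 0)
    have hkey : ∀ t : Ω, t ≠ 0 → ‖t‖ < r → ‖t‖ < ‖t0‖ → ‖c 0‖ ≤ (C / ‖t0‖) * ‖t‖ := by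
      intro t htne htr htt0
      obtain ⟨hsum, hzero⟩ := hc t htne htr
      have hsplit := Summable.tsum_eq_zero_add hsum
      rw [hzero] at hsplit
      simp only [pow_zero, one_mul] at hsplit
      have hc0 : c 0 = - ∑' k, t ^ (k + 1) * c (k + 1) :=
        eq_neg_of_add_eq_zero_left hsplit.symm
      rw [hc0, norm_neg]
      apply norm_tsum_le_of_forall_le_of_nonneg (by positivity)
      intro k
      have hb1 : ‖c (k + 1)‖ ≤ C / ‖t0‖ ^ (k + 1) := by
        rw [le_div_iff₀ (by positivity)]
        calc ‖c (k + 1)‖ * ‖t0‖ ^ (k + 1) = ‖t0 ^ (k + 1) * c (k + 1)‖ := by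
              rw [norm_mul, norm_pow]; ring
          _ ≤ C := hCb _
      calc ‖t ^ (k + 1) * c (k + 1)‖ = ‖t‖ ^ (k + 1) * ‖c (k + 1)‖ := by
            rw [norm_mul, norm_pow]
        _ ≤ ‖t‖ ^ (k + 1) * (C / ‖t0‖ ^ (k + 1)) :=
            mul_le_mul_of_nonneg_left hb1 (by positivity)
        _ = C * (‖t‖ / ‖t0‖) ^ (k + 1) := by rw [div_pow]; ring
        _ ≤ C * (‖t‖ / ‖t0‖) ^ 1 := by
            apply mul_le_mul_of_nonneg_left _ hC0
            exact pow_le_pow_of_le_one (by positivity) (le_of_lt ((div_lt_one ht00).mpr htt0))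
              (Nat.one_le_iff_ne_zero.mpr (Nat.succ_ne_zero k))
        _ = (C / ‖t0‖) * ‖t‖ := by rw [pow_one]; ring
    by_contra hne
    have hpos : 0 < ‖c 0‖ := norm_pos_iff.mpr hne
    set δ : ℝ := min (min r ‖t0‖) (‖t0‖ * ‖c 0‖ / (C + 1)) with hδ
    have hδ0 : 0 < δ := by
      apply lt_min (lt_min hr ht00)
      positivity
    obtain ⟨t, ht0', htδ⟩ := NormedField.exists_norm_lt Ω hδ0
    have htne : t ≠ 0 := by
      intro h; rw [h, norm_zero] at ht0'; exact lt_irrefl _ ht0'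
    have htr : ‖t‖ < r := lt_of_lt_of_le htδ (le_trans (min_le_left _ _) (min_le_left _ _))
    have htt0 : ‖t‖ < ‖t0‖ := lt_of_lt_of_le htδ (le_trans (min_le_left _ _) (min_le_right _ _))
    have h1 := hkey t htne htr htt0
    have h2 : ‖t‖ < ‖t0‖ * ‖c 0‖ / (C + 1) := lt_of_lt_of_le htδ (min_le_right _ _)
    have h3 : (C / ‖t0‖) * ‖t‖ < ‖c 0‖ := by
      have hCp : (0:ℝ) < C + 1 := by linarith
      rw [div_mul_eq_mul_div, div_lt_iff₀ ht00]
      calc C * ‖t‖ ≤ (C + 1) * ‖t‖ := by nlinarith [norm_nonneg t]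
        _ < (C + 1) * (‖t0‖ * ‖c 0‖ / (C + 1)) := by
            apply mul_lt_mul_of_pos_left h2 hCp
        _ = ‖c 0‖ * ‖t0‖ := by field_simp
    linarith
  intro c hc k
  induction k generalizing c with
  | zero => exact base c hc
  | succ k ih =>
    have hc0 : c 0 = 0 := base c hc
    have hd : ∀ t : Ω, t ≠ 0 → ‖t‖ < r →
        Summable (fun m => t ^ m * c (m + 1)) ∧ ∑' m, t ^ m * c (m + 1) = 0 := by
      intro t htne htr
      obtain ⟨hsum, hzero⟩ := hc t htne htr
      have hshift : Summable (fun m => t ^ (m + 1) * c (m + 1)) :=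
        hsum.comp_injective (add_left_injective 1)
      have heq : (fun m => t ^ m * c (m + 1)) = fun m => t⁻¹ * (t ^ (m + 1) * c (m + 1)) := by
        funext m
        field_simp
        ring
      constructor
      · rw [heq]; exact hshift.mul_left _
      · rw [heq, tsum_mul_left]
        have hsplit := Summable.tsum_eq_zero_add hsum
        rw [hzero] at hsplit
        simp only [pow_zero, one_mul, hc0, zero_add] at hsplit
        rw [← hsplit, mul_zero]
    exact ih (fun m => c (m + 1)) hd

end pckAux3

open IsUltrametricDist

/-- p-adic Cauchy–Kovalevskaya theorem: for `a_β, Φ ∈ 𝒜_ρ`, the Cauchy problem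
`∂u/∂t = ∑_{|β| ≤ n} a_β D^β u`, `u(0) = Φ` has the solution
`u(t) = ∑_k A^k Φ t^k/k!`, convergent (in `𝒜_ρ`) on the disk
`|t|_p < p^(-1/(p-1)) / max_β ρ^{-|β|}‖a_β‖_ρ`, and this solution is unique
among `𝒜_ρ`-valued power series in `t` with positive radius of convergence. -/
theorem padic_cauchy_kovalevskaya
    {p : ℕ} [Fact p.Prime]
    {Ω : Type*} [NontriviallyNormedField Ω] [NormedAlgebra ℚ_[p] Ω]
    [IsUltrametricDist Ω] [CompleteSpace Ω]
    (hiso : ∀ q : ℚ_[p], ‖algebraMap ℚ_[p] Ω q‖ = ‖q‖)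
    {n : ℕ} (ρ : ℝ) (hρ : 0 < ρ)
    (B : Finset (Fin n → ℕ)) (hB : ∀ β ∈ B, (∑ j, β j) ≤ n)
    (a : (Fin n → ℕ) → ((Fin n → ℕ) → Ω)) (ha : ∀ β ∈ B, MemTate n ρ (a β))
    (Ca : (Fin n → ℕ) → ℝ)
    (hCa : ∀ β ∈ B, ∀ i : Fin n → ℕ, ‖a β i‖ * ρ ^ (∑ j, i j) ≤ Ca β)
    (M : ℝ) (hM : ∀ β ∈ B, (ρ ^ (∑ j, β j))⁻¹ * Ca β ≤ M)
    (Φ : (Fin n → ℕ) → Ω) (hΦ : MemTate n ρ Φ) :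
    (∀ t : Ω, ‖t‖ < (p : ℝ) ^ (-(1 : ℝ) / ((p : ℝ) - 1)) / M →
      (∀ γ : Fin n → ℕ,
        Summable (fun k : ℕ => ((k ! : Ω))⁻¹ * t ^ k * (tateOp B a)^[k] Φ γ)) ∧
      (∀ ε > (0 : ℝ), ∃ N : ℕ, ∀ k ≥ N, ∀ γ : Fin n → ℕ,
        ‖((k ! : Ω))⁻¹ * t ^ k * (tateOp B a)^[k] Φ γ‖ * ρ ^ (∑ j, γ j) ≤ ε) ∧
      MemTate n ρ (fun γ => ∑' k : ℕ, ((k ! : Ω))⁻¹ * t ^ k * (tateOp B a)^[k] Φ γ) ∧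
      (∀ γ : Fin n → ℕ,
        ∑' k : ℕ, ((k ! : Ω))⁻¹ * t ^ k * (tateOp B a)^[k + 1] Φ γ =
          tateOp B a
            (fun γ' => ∑' k : ℕ, ((k ! : Ω))⁻¹ * t ^ k * (tateOp B a)^[k] Φ γ') γ)) ∧
    (∀ v : ℕ → ((Fin n → ℕ) → Ω), v 0 = Φ → ∀ r > (0 : ℝ),
      (∀ t : Ω, ‖t‖ < r → ∀ γ : Fin n → ℕ,
        Summable (fun k : ℕ => t ^ k * v k γ) ∧
        Summable (fun k : ℕ => ((k : Ω) + 1) * t ^ k * v (k + 1) γ) ∧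
        ∑' k : ℕ, ((k : Ω) + 1) * t ^ k * v (k + 1) γ =
          tateOp B a (fun γ' => ∑' k : ℕ, t ^ k * v k γ') γ) →
      ∀ k : ℕ, v k = fun γ => ((k ! : Ω))⁻¹ * (tateOp B a)^[k] Φ γ) := by
  have hp1 : 1 < (p:ℝ) := by exact_mod_cast (Fact.out : p.Prime).one_lt
  have hnat_norm : ∀ m : ℕ, ‖((m : ℕ) : Ω)‖ = ‖((m : ℕ) : ℚ_[p])‖ := fun m => by
    rw [← map_natCast (algebraMap ℚ_[p] Ω), hiso]
  have hone : ∀ N : ℕ, ‖(N : Ω)‖ ≤ 1 := by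
    intro N
    rw [hnat_norm]
    simpa using Padic.norm_int_le_one (p := p) (N : ℤ)
  have hNzero : ∀ m : ℕ, m ≠ 0 → ((m : ℕ) : Ω) ≠ 0 := by
    intro m hm h0
    have h1 := hnat_norm m
    rw [h0, norm_zero] at h1
    have h2 : ((m : ℕ) : ℚ_[p]) ≠ 0 := Nat.cast_ne_zero.mpr hm
    exact h2 (norm_eq_zero.mp h1.symm)
  set cc : ℝ := (p : ℝ) ^ (-(1 : ℝ) / ((p : ℝ) - 1)) with hcc
  have hc0 : 0 < cc := Real.rpow_pos_of_pos (by positivity) _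
  have hfactΩ : ∀ k : ℕ, ‖((k ! : Ω))⁻¹‖ ≤ (cc ^ k)⁻¹ := by
    intro k
    rw [norm_inv, hnat_norm (k !)]
    have hrw : (p:ℝ) ^ ((-(1:ℝ)/((p:ℝ)-1)) * k) = cc ^ k := by
      rw [hcc, Real.rpow_mul (by positivity), Real.rpow_natCast]
    have hineq : cc ^ k ≤ ‖((k ! : ℕ) : ℚ_[p])‖ := by
      rw [← hrw]; exact pck_factorial_norm k
    exact inv_anti₀ (by positivity) hineq
  constructor
  · -- existence / convergence part
    intro t ht
    have hM0 : 0 < M := by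
      rcases lt_trichotomy M 0 with h | h | h
      · have : cc / M < 0 := div_neg_of_pos_of_neg hc0 h
        exact absurd (lt_of_le_of_lt (norm_nonneg t) (lt_trans ht this)) (lt_irrefl 0)
      · rw [h, div_zero] at ht
        exact absurd (lt_of_le_of_lt (norm_nonneg t) ht) (lt_irrefl 0)
      · exact h
    have htM : ‖t‖ * M < cc := (lt_div_iff₀ hM0).mp ht
    set q : ℝ := ‖t‖ * M / cc with hq
    have hq0 : 0 ≤ q := by positivity
    have hq1 : q < 1 := (div_lt_one hc0).mpr htM
    obtain ⟨CΦ, hCΦ0, hCΦ⟩ := pck_bound_exists hρ hΦ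
    have hiter : ∀ k, ∀ γ : Fin n → ℕ,
        ‖(tateOp B a)^[k] Φ γ‖ * ρ ^ (∑ j, γ j) ≤ M ^ k * CΦ := by
      intro k
      induction k with
      | zero => simpa using hCΦ
      | succ k ih =>
        intro γ
        rw [Function.iterate_succ_apply']
        calc ‖tateOp B a ((tateOp B a)^[k] Φ) γ‖ * ρ ^ (∑ j, γ j)
            ≤ M * (M ^ k * CΦ) :=
              pck_opBound hρ hone hCa hM hM0.le (by positivity) ih γ
          _ = M ^ (k + 1) * CΦ := by ring
    have hterm : ∀ k, ∀ γ : Fin n → ℕ,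
        ‖((k ! : Ω))⁻¹ * t ^ k * (tateOp B a)^[k] Φ γ‖ * ρ ^ (∑ j, γ j) ≤ CΦ * q ^ k := by
      intro k γ
      calc ‖((k ! : Ω))⁻¹ * t ^ k * (tateOp B a)^[k] Φ γ‖ * ρ ^ (∑ j, γ j)
          = ‖((k ! : Ω))⁻¹‖ * ‖t‖ ^ k * (‖(tateOp B a)^[k] Φ γ‖ * ρ ^ (∑ j, γ j)) := by
            rw [norm_mul, norm_mul, norm_pow]; ring
        _ ≤ (cc ^ k)⁻¹ * ‖t‖ ^ k * (M ^ k * CΦ) := by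
            apply mul_le_mul
              (mul_le_mul (hfactΩ k) le_rfl (by positivity) (by positivity))
              (hiter k γ) (by positivity) (by positivity)
        _ = CΦ * q ^ k := by
            rw [hq, div_pow, mul_pow]
            field_simp
    have hsummable : ∀ γ : Fin n → ℕ,
        Summable (fun k : ℕ => ((k ! : Ω))⁻¹ * t ^ k * (tateOp B a)^[k] Φ γ) := by
      intro γ
      apply NonarchimedeanAddGroup.summable_of_tendsto_cofinite_zero
      rw [Nat.cofinite_eq_atTop, tendsto_zero_iff_norm_tendsto_zero]
      have hργ : (0:ℝ) < ρ ^ (∑ j, γ j) := pow_pos hρ _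
      have h2 : Tendsto (fun k : ℕ => CΦ * q ^ k / ρ ^ (∑ j, γ j)) atTop (nhds 0) := by
        have h1 : Tendsto (fun k : ℕ => CΦ * q ^ k) atTop (nhds 0) := by
          simpa using (tendsto_pow_atTop_nhds_zero_of_lt_one hq0 hq1).const_mul CΦ
        simpa using h1.div_const (ρ ^ (∑ j, γ j))
      exact squeeze_zero (fun k => norm_nonneg _)
        (fun k => (le_div_iff₀ hργ).mpr (hterm k γ)) h2
    have hlim : Tendsto (fun k : ℕ => CΦ * q ^ k) atTop (nhds 0) := by
      simpa using (tendsto_pow_atTop_nhds_zero_of_lt_one hq0 hq1).const_mul CΦ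
    have hii : ∀ ε > (0 : ℝ), ∃ N : ℕ, ∀ k ≥ N, ∀ γ : Fin n → ℕ,
        ‖((k ! : Ω))⁻¹ * t ^ k * (tateOp B a)^[k] Φ γ‖ * ρ ^ (∑ j, γ j) ≤ ε := by
      intro ε hε
      obtain ⟨N, hN⟩ := eventually_atTop.mp (hlim.eventually_lt_const hε)
      exact ⟨N, fun k hk γ => le_trans (hterm k γ) (hN k hk).le⟩
    refine ⟨hsummable, hii, ?_, ?_⟩
    · -- MemTate of the sum
      have hmem_iter : ∀ k, MemTate n ρ ((tateOp B a)^[k] Φ) := by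
        intro k
        induction k with
        | zero => simpa using hΦ
        | succ k ih =>
          have h1 := pck_memTate_op hρ hone ha ih
          rwa [← Function.iterate_succ_apply' (tateOp B a) k Φ] at h1
      unfold MemTate
      rw [Metric.tendsto_nhds]
      intro ε hε
      obtain ⟨N, hN⟩ := eventually_atTop.mp (hlim.eventually_lt_const (half_pos hε))
      have hhead : MemTate n ρ
          (fun γ => ∑ k ∈ Finset.range N, ((k ! : Ω))⁻¹ * t ^ k * (tateOp B a)^[k] Φ γ) := by
        apply pck_memTate_sum hρ
        intro k _
        have h2 := pck_memTate_const_mul (hmem_iter k) (((k ! : Ω))⁻¹ * t ^ k)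
        simpa [mul_assoc] using h2
      have hheadev := Metric.tendsto_nhds.mp hhead (ε/2) (half_pos hε)
      filter_upwards [hheadev] with γ hγ
      rw [Real.dist_eq, sub_zero, abs_of_nonneg (by positivity)] at hγ ⊢
      have hργ : (0:ℝ) < ρ ^ (∑ j, γ j) := pow_pos hρ _
      have hsplit := Summable.sum_add_tsum_nat_add
        (f := fun k => ((k ! : Ω))⁻¹ * t ^ k * (tateOp B a)^[k] Φ γ) N (hsummable γ)
      have htail : ‖∑' k : ℕ, (((k + N) ! : Ω))⁻¹ * t ^ (k + N) * (tateOp B a)^[k + N] Φ γ‖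
          ≤ (ε / 2) / ρ ^ (∑ j, γ j) := by
        apply norm_tsum_le_of_forall_le_of_nonneg (by positivity)
        intro k
        refine (le_div_iff₀ hργ).mpr ?_
        calc ‖(((k + N) ! : Ω))⁻¹ * t ^ (k + N) * (tateOp B a)^[k + N] Φ γ‖ * ρ ^ (∑ j, γ j)
            ≤ CΦ * q ^ (k + N) := hterm (k + N) γ
          _ ≤ CΦ * q ^ N := mul_le_mul_of_nonneg_left
              (pow_le_pow_of_le_one hq0 hq1.le (Nat.le_add_left N k)) hCΦ0.le
          _ ≤ ε / 2 := (hN N le_rfl).le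
      calc ‖∑' k : ℕ, ((k ! : Ω))⁻¹ * t ^ k * (tateOp B a)^[k] Φ γ‖ * ρ ^ (∑ j, γ j)
          = ‖(∑ k ∈ Finset.range N, ((k ! : Ω))⁻¹ * t ^ k * (tateOp B a)^[k] Φ γ)
              + ∑' k : ℕ, (((k + N) ! : Ω))⁻¹ * t ^ (k + N) * (tateOp B a)^[k + N] Φ γ‖
              * ρ ^ (∑ j, γ j) := by rw [hsplit]
        _ ≤ max (‖∑ k ∈ Finset.range N, ((k ! : Ω))⁻¹ * t ^ k * (tateOp B a)^[k] Φ γ‖)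
              (‖∑' k : ℕ, (((k + N) ! : Ω))⁻¹ * t ^ (k + N) * (tateOp B a)^[k + N] Φ γ‖)
              * ρ ^ (∑ j, γ j) :=
            mul_le_mul_of_nonneg_right (norm_add_le_max _ _) hργ.le
        _ < ε := by
            rw [max_mul_of_nonneg _ _ hργ.le]
            refine max_lt (by linarith) ?_
            calc ‖∑' k : ℕ, (((k + N) ! : Ω))⁻¹ * t ^ (k + N) * (tateOp B a)^[k + N] Φ γ‖
                  * ρ ^ (∑ j, γ j)
                ≤ ((ε / 2) / ρ ^ (∑ j, γ j)) * ρ ^ (∑ j, γ j) :=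
                  mul_le_mul_of_nonneg_right htail hργ.le
              _ = ε / 2 := div_mul_cancel₀ _ hργ.ne'
              _ < ε := by linarith
    · -- exchange of sum and operator
      intro γ
      have hswap := pck_tateOp_tsum (B := B) (a := a)
        (F := fun k γ' => ((k ! : Ω))⁻¹ * t ^ k * (tateOp B a)^[k] Φ γ') hsummable γ
      rw [hswap]
      refine tsum_congr fun k => ?_
      have h1 : tateOp B a (fun γ' => (((k ! : Ω))⁻¹ * t ^ k) * (tateOp B a)^[k] Φ γ') γ
          = (((k ! : Ω))⁻¹ * t ^ k) * tateOp B a ((tateOp B a)^[k] Φ) γ :=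
        pck_tateOp_const_mul _ _ γ
      rw [h1, Function.iterate_succ_apply']
  · -- uniqueness part
    intro v hv0 r hr hode
    have key : ∀ (k : ℕ), ∀ γ : Fin n → ℕ, ((k : Ω) + 1) * v (k + 1) γ = tateOp B a (v k) γ := by
      intro k γ
      have hz := pck_zero_coeff hr
        (fun m => ((m : Ω) + 1) * v (m + 1) γ - tateOp B a (v m) γ) ?_ k
      · exact sub_eq_zero.mp hz
      · intro t htne htr
        have h1 := hode t htr
        have hsum1 : Summable (fun m : ℕ => ((m : Ω) + 1) * t ^ m * v (m + 1) γ) := (h1 γ).2.1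
        have hrep : ∀ m : ℕ, t ^ m * tateOp B a (v m) γ = ∑ β ∈ B, ∑ i ∈ Finset.Iic γ,
            (a β i * ((∏ j, ((γ - i) j + β j).descFactorial (β j) : ℕ) : Ω))
              * (t ^ m * v m ((γ - i) + β)) := by
          intro m
          simp only [tateOp, tateMul, tateDpow, Finset.mul_sum]
          exact Finset.sum_congr rfl fun β _ => Finset.sum_congr rfl fun i _ => by ring
        have hsum2 : Summable (fun m : ℕ => t ^ m * tateOp B a (v m) γ) := by
          apply Summable.congr _ (fun m => (hrep m).symm)
          exact summable_sum fun β _ => summable_sum fun i _ => ((h1 _).1).mul_left _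
        constructor
        · apply Summable.congr (hsum1.sub hsum2)
          intro m; ring
        · have hdiff : (fun m : ℕ => t ^ m *
              (((m : Ω) + 1) * v (m + 1) γ - tateOp B a (v m) γ))
              = fun m : ℕ => (((m : Ω) + 1) * t ^ m * v (m + 1) γ)
                  - (t ^ m * tateOp B a (v m) γ) := by
            funext m; ring
          rw [hdiff, Summable.tsum_sub hsum1 hsum2, (h1 γ).2.2]
          have hswap : ∑' m : ℕ, t ^ m * tateOp B a (v m) γ
              = tateOp B a (fun γ' => ∑' m : ℕ, t ^ m * v m γ') γ := by
            rw [pck_tateOp_tsum (B := B) (a := a) (F := fun m γ' => t ^ m * v m γ')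
              (fun γ' => (h1 γ').1) γ]
            exact tsum_congr fun m => (pck_tateOp_const_mul _ _ γ).symm
          rw [hswap, sub_self]
    intro k
    induction k with
    | zero =>
      funext γ
      rw [hv0]
      simp
    | succ k ih =>
      funext γ
      have hk := key k γ
      rw [ih] at hk
      have h2 : tateOp B a (fun γ' => ((k ! : Ω))⁻¹ * (tateOp B a)^[k] Φ γ') γ
          = ((k ! : Ω))⁻¹ * (tateOp B a)^[k + 1] Φ γ := by
        rw [Function.iterate_succ_apply']
        exact pck_tateOp_const_mul _ _ γ
      rw [h2] at hk
      have hne1 : ((k : Ω) + 1) ≠ 0 := by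
        have h3 : (((k + 1 : ℕ)) : Ω) ≠ 0 := hNzero _ (Nat.succ_ne_zero k)
        push_cast at h3
        exact h3
      have hne2 : ((k ! : Ω)) ≠ 0 := hNzero _ k.factorial_ne_zero
      have hfs : (((k + 1) ! : Ω)) = ((k : Ω) + 1) * (k ! : Ω) := by
        rw [Nat.factorial_succ]; push_cast; ring
      have h4 := congrArg (fun x => ((k : Ω) + 1)⁻¹ * x) hk
      simp only [inv_mul_cancel_left₀ hne1] at h4
      rw [h4, hfs, mul_inv]
      ring
end
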